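/- arXiv:1503.00030 — 3 statements merged into one kernel-verified Lean document; each statement's English description precedes it below -/
import Mathlib

section
/- In a projective d-tree on {1,…,L}, for every position h, the yield of h — the set consisting of h together with all positions reachable from h by a directed path — is an interval of consecutive positions. -/
/-- A (plain, unlabeled) dependency tree on positions `{1,…,L}`: a directed rooted
tree whose vertex set is `{1,…,L}`, given by the parent map `par` (so `par m = some h`
means there is an arc from head `h` to modifier `m`); every vertex is reachable from
the root. -/
structure DTree (L : ℕ) : Type where
  root : Fin L
  par : Fin L → Option (Fin L)
  root_par : par root = none
  reach : ∀ v : Fin L, Relation.ReflTransGen (fun a b => par b = some a) root v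

namespace DTree

variable {L : ℕ}

/-- The arc relation: `h` is the head of `m`. -/
def arc (D : DTree L) (h m : Fin L) : Prop := D.par m = some h

/-- Projectivity: for every arc `(h,m)`, every position strictly between `h` and `m`
is reachable from `h` by a directed path. -/
def Projective (D : DTree L) : Prop :=
  ∀ h m, D.arc h m → ∀ d : Fin L, min h m < d → d < max h m →
    Relation.ReflTransGen D.arc h d

end DTree

/-- Key convexity lemma: anything strictly between `h` and a vertex reachable from `h`
is itself reachable from `h`. -/
lemma stmt7_key (L : ℕ) (D : DTree L) (hproj : D.Projective) (h : Fin L) :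
    ∀ v, Relation.ReflTransGen D.arc h v → ∀ d : Fin L, min h v < d → d < max h v →
      Relation.ReflTransGen D.arc h d := by
  intro v hv
  induction hv with
  | refl =>
      intro d h1 h2
      simp only [min_self, max_self] at h1 h2
      exact absurd (h1.trans h2) (lt_irrefl h)
  | @tail m v hm harc ih =>
      intro d h1 h2
      rcases eq_or_ne d m with rfl | hdm
      · exact hm
      · by_cases hbm : min m v < d ∧ d < max m v
        · exact hm.trans (hproj m v harc d hbm.1 hbm.2)
        · push_neg at hbm
          rw [min_lt_iff, max_le_iff] at hbm
          rw [min_lt_iff] at h1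
          rw [lt_max_iff] at h2
          rcases lt_trichotomy d m with hc | hc | hc
          · refine ih d (min_lt_iff.mpr (Or.inl ?_)) (lt_max_iff.mpr (Or.inr hc))
            rcases h1 with h1 | h1
            · exact h1
            · exact absurd (hbm (Or.inr h1)).1 (not_le.mpr hc)
          · exact absurd hc hdm
          · refine ih d (min_lt_iff.mpr (Or.inr hc)) (lt_max_iff.mpr (Or.inl ?_))
            rcases h2 with h2 | h2
            · exact h2
            · exact absurd (hbm (Or.inl hc)).2 (not_le.mpr h2)

/-- In a projective d-tree on `{1,…,L}`, for every position `h`, the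
yield of `h` — the set consisting of `h` together with all positions reachable from
`h` by a directed path — is an interval of consecutive positions. -/
theorem stmt7 (L : ℕ) (D : DTree L) (hproj : D.Projective) (h : Fin L) :
    ∃ a b : Fin L, {v : Fin L | Relation.ReflTransGen D.arc h v} = Set.Icc a b := by
  classical
  set S : Set (Fin L) := {v : Fin L | Relation.ReflTransGen D.arc h v} with hS
  have hhS : h ∈ S := Relation.ReflTransGen.refl
  have hfin : S.Finite := Set.toFinite S
  let T : Finset (Fin L) := hfin.toFinset
  have hT : ∀ v, v ∈ T ↔ v ∈ S := fun v => hfin.mem_toFinset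
  have hTne : T.Nonempty := ⟨h, (hT h).mpr hhS⟩
  refine ⟨T.min' hTne, T.max' hTne, ?_⟩
  have convex : ∀ x ∈ S, ∀ y ∈ S, ∀ v : Fin L, x ≤ v → v ≤ y → v ∈ S := by
    intro x hx y hy v hxv hvy
    rcases lt_trichotomy v h with hc | rfl | hc
    · rcases eq_or_lt_of_le hxv with rfl | hxv'
      · exact hx
      · exact stmt7_key L D hproj h x hx v
          (min_lt_iff.mpr (Or.inr hxv')) (lt_max_iff.mpr (Or.inl hc))
    · exact hhS
    · rcases eq_or_lt_of_le hvy with rfl | hvy'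
      · exact hy
      · exact stmt7_key L D hproj h y hy v
          (min_lt_iff.mpr (Or.inl hc)) (lt_max_iff.mpr (Or.inr hvy'))
  ext v
  constructor
  · intro hv
    exact ⟨T.min'_le v ((hT v).mpr hv), T.le_max' v ((hT v).mpr hv)⟩
  · rintro ⟨h1, h2⟩
    exact convex _ ((hT _).mp (T.min'_mem hTne)) _ ((hT _).mp (T.max'_mem hTne)) v h1 h2
end

section
/- A projective d-tree has no crossing arcs: there do not exist two arcs (h,m) and (h',m') such that exactly one of the two endpoints h', m' lies strictly between h and m (i.e., min(h,m) < x < max(h,m) holds for exactly one x ∈ {h',m'}, and neither h' nor m' equals h or m). -/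
/-!
Projectivity of `(h, m)` makes `h` reach the inner endpoint of `(h', m')`, hence `h'` itself
(if the inner endpoint is `m'`, its head is `h'`). Since the arcs cross, `h` or `m` lies strictly
between `h'` and `m'`, so by projectivity of `(h', m')` the vertex `h'` reaches `h` or `m`, hence
reaches `h` (the only way into `m` is through `h`). As a tree has no cycles, reachability is
antisymmetric and `h' = h`.
-/

open Relation

theorem exists_endpoint_between_of_crossing {α : Type*} [LinearOrder α] {a b p q : α}
    (hp : min a b < p ∧ p < max a b) (hq : ¬ (min a b < q ∧ q < max a b))
    (hqa : q ≠ a) (hqb : q ≠ b) :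
    ∃ e, (e = a ∨ e = b) ∧ min p q < e ∧ e < max p q := by
  rcases le_total a b with hab | hab
  · simp only [min_eq_left hab, max_eq_right hab, not_and_or, not_lt] at hp hq
    rcases hq with hq | hq
    · exact ⟨a, .inl rfl, min_lt_iff.2 (.inr (lt_of_le_of_ne hq hqa)), lt_max_iff.2 (.inl hp.1)⟩
    · exact ⟨b, .inr rfl, min_lt_iff.2 (.inl hp.2), lt_max_iff.2 (.inr (lt_of_le_of_ne' hq hqb))⟩
  · simp only [min_eq_right hab, max_eq_left hab, not_and_or, not_lt] at hp hq
    rcases hq with hq | hq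
    · exact ⟨b, .inr rfl, min_lt_iff.2 (.inr (lt_of_le_of_ne hq hqb)), lt_max_iff.2 (.inl hp.1)⟩
    · exact ⟨a, .inl rfl, min_lt_iff.2 (.inl hp.2), lt_max_iff.2 (.inr (lt_of_le_of_ne' hq hqa))⟩

namespace DTree

variable {L : ℕ} (D : DTree L)

theorem eq_of_arc_of_arc {h h' m : Fin L} (h₁ : D.arc h m) (h₂ : D.arc h' m) : h = h' :=
  Option.some_injective _ (h₁.symm.trans h₂)

theorem reflTransGen_head_of_arc {h m a : Fin L} (hhm : D.arc h m)
    (ham : ReflTransGen D.arc a m) (hne : a ≠ m) : ReflTransGen D.arc a h := by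
  rcases ham.cases_tail with rfl | ⟨c, hac, hcm⟩
  · exact absurd rfl hne
  · exact D.eq_of_arc_of_arc hcm hhm ▸ hac

/-- Following parents from a vertex on a cycle never leaves the cycle, so the root would have
a parent. -/
theorem not_transGen_arc_self (a : Fin L) : ¬ TransGen D.arc a a := by
  intro hcyc
  have hanc : ∀ x, ReflTransGen D.arc x a → TransGen D.arc a x := by
    intro x hxa
    induction hxa using ReflTransGen.head_induction_on with
    | refl => exact hcyc
    | head hxy _ ih =>
      obtain ⟨z, haz, hzy⟩ := TransGen.tail'_iff.1 ih
      exact hcyc.trans_left (D.eq_of_arc_of_arc hzy hxy ▸ haz)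
  obtain ⟨z, -, hz⟩ := TransGen.tail'_iff.1 (hanc D.root (D.reach a))
  exact Option.some_ne_none z (hz.symm.trans D.root_par)

theorem reflTransGen_arc_antisymm {a b : Fin L} (hab : ReflTransGen D.arc a b)
    (hba : ReflTransGen D.arc b a) : a = b := by
  rcases reflTransGen_iff_eq_or_transGen.1 hab with rfl | hab
  · rfl
  · exact absurd (hab.trans_left hba) (D.not_transGen_arc_self a)

theorem eq_head_of_reflTransGen_endpoint {h m x e : Fin L} (hhm : D.arc h m)
    (hhx : ReflTransGen D.arc h x) (hxm : x ≠ m) (hxe : ReflTransGen D.arc x e)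
    (he : e = h ∨ e = m) : x = h := by
  rcases he with rfl | rfl
  · exact (D.reflTransGen_arc_antisymm hhx hxe).symm
  · exact (D.reflTransGen_arc_antisymm hhx (D.reflTransGen_head_of_arc hhm hxe hxm)).symm

end DTree

/-- A projective d-tree has no crossing arcs: there are no two arcs
`(h,m)` and `(h',m')` such that exactly one of the two endpoints `h'`, `m'` lies
strictly between `h` and `m`, and neither `h'` nor `m'` equals `h` or `m`. -/
theorem stmt8 (L : ℕ) (D : DTree L) (hproj : D.Projective) :
    ¬ ∃ h m h' m' : Fin L, D.arc h m ∧ D.arc h' m' ∧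
        Xor' (min h m < h' ∧ h' < max h m) (min h m < m' ∧ m' < max h m) ∧
        h' ≠ h ∧ h' ≠ m ∧ m' ≠ h ∧ m' ≠ m := by
  rintro ⟨h, m, h', m', hhm, hh'm', hcross, hh'h, hh'm, hm'h, hm'm⟩
  have hreach_h' : ReflTransGen D.arc h h' := by
    rcases hcross with ⟨⟨lo, hi⟩, -⟩ | ⟨⟨lo, hi⟩, -⟩
    · exact hproj h m hhm h' lo hi
    · exact D.reflTransGen_head_of_arc hh'm' (hproj h m hhm m' lo hi) hm'h.symm
  obtain ⟨e, he, lo, hi⟩ : ∃ e, (e = h ∨ e = m) ∧ min h' m' < e ∧ e < max h' m' := by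
    rcases hcross with ⟨hin, hout⟩ | ⟨hin, hout⟩
    · exact exists_endpoint_between_of_crossing hin hout hm'h hm'm
    · simpa only [min_comm, max_comm] using
        exists_endpoint_between_of_crossing hin hout hh'h hh'm
  exact hh'h (D.eq_head_of_reflTransGen_endpoint hhm hreach_h' hh'm (hproj h' m' hh'm' e lo hi) he)
end

section
/- Let h be an integer and M a finite set of integers with h ∉ M, and let ≺ be a strict total order on M. Then ≺ has the nesting property with respect to h if and only if every m ∈ M is the closest remaining element to h on its side: for every m ∈ M, letting R = {m' ∈ M : not (m' ≺ m)} be the set of elements not preceding m (so m ∈ R), either m < h and m = max{m' ∈ R : m' < h}, or m > h and m = min{m' ∈ R : m' > h}. -/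
/-- Let `h` be an integer and `M` a finite set of integers with
`h ∉ M`, and let `lt` be a strict total order on `M`.  Then `lt` has the nesting
property with respect to `h` (whenever `mi, mj ∈ M` satisfy `h < mi < mj` or
`h > mi > mj`, then `lt mi mj`) if and only if every `m ∈ M` is the closest
remaining element to `h` on its side: for every `m ∈ M`, considering the set
`R = {m' ∈ M : ¬ lt m' m}` of elements not preceding `m` (note `m ∈ R`), either
`m < h` and `m` is the maximum of `{m' ∈ R : m' < h}`, or `m > h` and `m` is the
minimum of `{m' ∈ R : h < m'}`. -/
theorem stmt11 (h : ℤ) (M : Finset ℤ) (hM : h ∉ M) (lt : ℤ → ℤ → Prop)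
    (h_irr : ∀ m ∈ M, ¬ lt m m)
    (h_trans : ∀ a ∈ M, ∀ b ∈ M, ∀ c ∈ M, lt a b → lt b c → lt a c)
    (h_total : ∀ a ∈ M, ∀ b ∈ M, a ≠ b → lt a b ∨ lt b a) :
    (∀ mi ∈ M, ∀ mj ∈ M, ((h < mi ∧ mi < mj) ∨ (mj < mi ∧ mi < h)) → lt mi mj) ↔
    (∀ m ∈ M,
      (m < h ∧ ∀ m' ∈ M, ¬ lt m' m → m' < h → m' ≤ m) ∨
      (h < m ∧ ∀ m' ∈ M, ¬ lt m' m → h < m' → m ≤ m')) := by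
  constructor
  · intro hn m hm
    rcases lt_trichotomy m h with hmh | hmh | hmh
    case inr.inl => exact absurd (hmh ▸ hm) hM
    · left
      refine ⟨hmh, fun m' hm' hnl hlt => ?_⟩
      by_contra hgt
      exact hnl (hn m' hm' m hm (Or.inr ⟨lt_of_not_ge hgt, hlt⟩))
    · right
      refine ⟨hmh, fun m' hm' hnl hlt => ?_⟩
      by_contra hgt
      exact hnl (hn m' hm' m hm (Or.inl ⟨hlt, lt_of_not_ge hgt⟩))
  · intro hc mi hmi mj hmj hij
    by_contra hnl
    rcases hc mj hmj with ⟨hjh, hmax⟩ | ⟨hjh, hmin⟩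
    · rcases hij with ⟨h1, h2⟩ | ⟨h1, h2⟩
      · omega
      · have := hmax mi hmi hnl h2
        omega
    · rcases hij with ⟨h1, h2⟩ | ⟨h1, h2⟩
      · have := hmin mi hmi hnl h1
        omega
      · omega
end
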